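/- The matrix A_τ, defined in 2d×2d block form with blocks ((1-τ)I, τI, 0, 0; 0, 0, τI, -(1-τ)I; 0, 0, I, I; -I, I, 0, 0), is symplectic, i.e. A_τᵀ J A_τ = J where J is the standard 4d×4d symplectic matrix ((0, I_{2d}); (-I_{2d}, 0)). -/
import Mathlib

open Matrix

/-- The matrix `A_τ` (given in 4×4 block form by d×d blocks) is symplectic:
`A_τᵀ J A_τ = J`, where `J` is the standard 4d×4d symplectic matrix. -/
theorem stmt_0 (d : ℕ) (hd : 1 ≤ d) (τ : ℝ)
    (Aτ : Matrix ((Fin d ⊕ Fin d) ⊕ (Fin d ⊕ Fin d)) ((Fin d ⊕ Fin d) ⊕ (Fin d ⊕ Fin d)) ℝ)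
    (hAτ : Aτ = fromBlocks
      (fromBlocks ((1 - τ) • (1 : Matrix (Fin d) (Fin d) ℝ)) (τ • 1) 0 0)
      (fromBlocks 0 0 (τ • 1) (-((1 - τ) • 1)))
      (fromBlocks 0 0 (-1) 1)
      (fromBlocks 1 1 0 0))
    (J : Matrix ((Fin d ⊕ Fin d) ⊕ (Fin d ⊕ Fin d)) ((Fin d ⊕ Fin d) ⊕ (Fin d ⊕ Fin d)) ℝ)
    (hJ : J = fromBlocks 0 1 (-1) 0) :
    Aτᵀ * J * Aτ = J := by
  subst hAτ hJ
  ext i j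
  rcases i with (i|i)|(i|i) <;> rcases j with (j|j)|(j|j) <;>
    simp [fromBlocks_transpose, fromBlocks_multiply, fromBlocks, Matrix.mul_apply,
      Matrix.one_apply, Matrix.smul_apply] <;> split_ifs <;> ring
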